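/- arXiv:2001.08453 — 6 statements merged into one kernel-verified Lean document; each statement's English description precedes it below -/
import Mathlib

section
/- Let C be a category with finite coproducts and kernel pairs, and let F : C → C be a functor that weakly preserves kernel pairs (it sends every kernel pair diagram to a weak pullback). Then F weakly preserves pullbacks of retractions: if f₁ : A₁ → C' and f₂ : A₂ → C' are split epimorphisms (retractions) and (P, p₁, p₂) is their pullback, then (F P, F p₁, F p₂) is a weak pullback of F f₁ and F f₂. -/
/-!
The cospan `A₁ → C' ← A₂` is a retract of the kernel-pair cospan of `[f₁, f₂] : A₁ ⨿ A₂ → C'`: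
it embeds by the coproduct injections, and the sections `g₁`, `g₂` give retractions
`[1, f₂ ≫ g₁] : A₁ ⨿ A₂ → A₁` and `[f₁ ≫ g₂, 1] : A₁ ⨿ A₂ → A₂` over `C'`. These retractions
induce a map from the kernel pair to the pullback `P`. A retract of a weak pullback, in this
sense, is again a weak pullback, and `F` preserves all of this data, so the weak pullback that
`F` makes of the kernel pair yields one on `F P`.
-/

open CategoryTheory Limits

namespace CategoryTheory

variable {C D : Type*} [Category C] [Category D]

def IsWeakPullback {P X Y Z : C} (fst : P ⟶ X) (snd : P ⟶ Y) (f : X ⟶ Z) (g : Y ⟶ Z) : Prop :=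
  fst ≫ f = snd ≫ g ∧ ∀ {Q : C} (u₁ : Q ⟶ X) (u₂ : Q ⟶ Y), u₁ ≫ f = u₂ ≫ g →
    ∃ w : Q ⟶ P, w ≫ fst = u₁ ∧ w ≫ snd = u₂

theorem IsWeakPullback.of_retract {P X Y Z K X' Y' Z' : C} {p₁ : P ⟶ X} {p₂ : P ⟶ Y}
    {f₁ : X ⟶ Z} {f₂ : Y ⟶ Z} {π₁ : K ⟶ X'} {π₂ : K ⟶ Y'} {e₁ : X' ⟶ Z'} {e₂ : Y' ⟶ Z'}
    (hK : IsWeakPullback π₁ π₂ e₁ e₂) (hcomm : p₁ ≫ f₁ = p₂ ≫ f₂)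
    (i₁ : X ⟶ X') (i₂ : Y ⟶ Y') (i : Z ⟶ Z') (hi₁ : i₁ ≫ e₁ = f₁ ≫ i) (hi₂ : i₂ ≫ e₂ = f₂ ≫ i)
    (h₁ : X' ⟶ X) (h₂ : Y' ⟶ Y) (hih₁ : i₁ ≫ h₁ = 𝟙 X) (hih₂ : i₂ ≫ h₂ = 𝟙 Y)
    (r : K ⟶ P) (hr₁ : r ≫ p₁ = π₁ ≫ h₁) (hr₂ : r ≫ p₂ = π₂ ≫ h₂) :
    IsWeakPullback p₁ p₂ f₁ f₂ := by
  refine ⟨hcomm, fun u₁ u₂ hu => ?_⟩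
  obtain ⟨w, hw₁, hw₂⟩ := hK.2 (u₁ ≫ i₁) (u₂ ≫ i₂) (by simp only [Category.assoc, hi₁, hi₂,
    reassoc_of% hu])
  exact ⟨w ≫ r, by simp [hr₁, reassoc_of% hw₁, hih₁], by simp [hr₂, reassoc_of% hw₂, hih₂]⟩

theorem IsWeakPullback.map_of_retract (F : C ⥤ D) {P X Y Z K X' Y' Z' : C} {p₁ : P ⟶ X}
    {p₂ : P ⟶ Y} {f₁ : X ⟶ Z} {f₂ : Y ⟶ Z} {π₁ : K ⟶ X'} {π₂ : K ⟶ Y'} {e₁ : X' ⟶ Z'}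
    {e₂ : Y' ⟶ Z'}
    (hK : IsWeakPullback (F.map π₁) (F.map π₂) (F.map e₁) (F.map e₂)) (hcomm : p₁ ≫ f₁ = p₂ ≫ f₂)
    (i₁ : X ⟶ X') (i₂ : Y ⟶ Y') (i : Z ⟶ Z') (hi₁ : i₁ ≫ e₁ = f₁ ≫ i) (hi₂ : i₂ ≫ e₂ = f₂ ≫ i)
    (h₁ : X' ⟶ X) (h₂ : Y' ⟶ Y) (hih₁ : i₁ ≫ h₁ = 𝟙 X) (hih₂ : i₂ ≫ h₂ = 𝟙 Y)
    (r : K ⟶ P) (hr₁ : r ≫ p₁ = π₁ ≫ h₁) (hr₂ : r ≫ p₂ = π₂ ≫ h₂) :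
    IsWeakPullback (F.map p₁) (F.map p₂) (F.map f₁) (F.map f₂) := by
  refine hK.of_retract ?_ (F.map i₁) (F.map i₂) (F.map i) ?_ ?_ (F.map h₁) (F.map h₂) ?_ ?_
    (F.map r) ?_ ?_ <;>
  simp only [← F.map_comp, hcomm, hi₁, hi₂, hih₁, hih₂, hr₁, hr₂, F.map_id]

theorem Limits.pullback.existsUnique_lift {X Y Z W : C} (f : X ⟶ Z) (g : Y ⟶ Z)
    [HasPullback f g] (q₁ : W ⟶ X) (q₂ : W ⟶ Y) (h : q₁ ≫ f = q₂ ≫ g) :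
    ∃! q : W ⟶ pullback f g, q ≫ pullback.fst f g = q₁ ∧ q ≫ pullback.snd f g = q₂ :=
  ⟨pullback.lift q₁ q₂ h, ⟨pullback.lift_fst _ _ _, pullback.lift_snd _ _ _⟩,
    fun _ ⟨h₁, h₂⟩ => pullback.hom_ext (by rw [h₁, pullback.lift_fst])
      (by rw [h₂, pullback.lift_snd])⟩

end CategoryTheory

/-- Theorem 4 (Gumm): in a category with finite coproducts and kernel pairs, a functor
that weakly preserves kernel pairs weakly preserves pullbacks of retractions
(split epimorphisms). -/
theorem weakly_preserves_pullbacks_of_retractions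
    {C : Type*} [Category C] [Limits.HasBinaryCoproducts C]
    (hker : ∀ {X Y : C} (f : X ⟶ Y), Limits.HasPullback f f)
    (F : C ⥤ C)
    -- `F` weakly preserves kernel pairs: every kernel-pair diagram (a pullback of `f`
    -- with itself) is sent to a weak pullback.
    (hF : ∀ {X Y K : C} (f : X ⟶ Y) (π₁ π₂ : K ⟶ X),
      π₁ ≫ f = π₂ ≫ f →
      (∀ {Q : C} (q₁ q₂ : Q ⟶ X), q₁ ≫ f = q₂ ≫ f →
        ∃! q : Q ⟶ K, q ≫ π₁ = q₁ ∧ q ≫ π₂ = q₂) →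
      ∀ {Q : C} (u₁ u₂ : Q ⟶ F.obj X), u₁ ≫ F.map f = u₂ ≫ F.map f →
        ∃ w : Q ⟶ F.obj K, w ≫ F.map π₁ = u₁ ∧ w ≫ F.map π₂ = u₂)
    -- a pullback `(P, p₁, p₂)` of retractions `f₁`, `f₂`:
    {A₁ A₂ C' P : C} (f₁ : A₁ ⟶ C') (f₂ : A₂ ⟶ C')
    (g₁ : C' ⟶ A₁) (g₂ : C' ⟶ A₂) (hg₁ : g₁ ≫ f₁ = 𝟙 C') (hg₂ : g₂ ≫ f₂ = 𝟙 C')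
    (p₁ : P ⟶ A₁) (p₂ : P ⟶ A₂) (hcomm : p₁ ≫ f₁ = p₂ ≫ f₂)
    (huniv : ∀ {Q : C} (q₁ : Q ⟶ A₁) (q₂ : Q ⟶ A₂), q₁ ≫ f₁ = q₂ ≫ f₂ →
      ∃! q : Q ⟶ P, q ≫ p₁ = q₁ ∧ q ≫ p₂ = q₂) :
    -- then `(F P, F p₁, F p₂)` is a weak pullback of `F f₁` and `F f₂`:
    F.map p₁ ≫ F.map f₁ = F.map p₂ ≫ F.map f₂ ∧
      ∀ {Q : C} (u₁ : Q ⟶ F.obj A₁) (u₂ : Q ⟶ F.obj A₂),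
        u₁ ≫ F.map f₁ = u₂ ≫ F.map f₂ →
          ∃ w : Q ⟶ F.obj P, w ≫ F.map p₁ = u₁ ∧ w ≫ F.map p₂ = u₂ := by
  let f : A₁ ⨿ A₂ ⟶ C' := coprod.desc f₁ f₂
  have := hker f
  have hK : IsWeakPullback (F.map (pullback.fst f f)) (F.map (pullback.snd f f)) (F.map f)
      (F.map f) :=
    ⟨by simp only [← F.map_comp, pullback.condition],
      hF f _ _ pullback.condition (pullback.existsUnique_lift f f)⟩
  let h₁ : A₁ ⨿ A₂ ⟶ A₁ := coprod.desc (𝟙 A₁) (f₂ ≫ g₁)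
  let h₂ : A₁ ⨿ A₂ ⟶ A₂ := coprod.desc (f₁ ≫ g₂) (𝟙 A₂)
  have hh₁ : h₁ ≫ f₁ = f := by
    rw [coprod.desc_comp, Category.id_comp, Category.assoc, hg₁, Category.comp_id]
  have hh₂ : h₂ ≫ f₂ = f := by
    rw [coprod.desc_comp, Category.id_comp, Category.assoc, hg₂, Category.comp_id]
  obtain ⟨r, ⟨hr₁, hr₂⟩, -⟩ := huniv (pullback.fst f f ≫ h₁) (pullback.snd f f ≫ h₂)
    (by simp only [Category.assoc, hh₁, hh₂, pullback.condition])
  exact hK.map_of_retract F hcomm coprod.inl coprod.inr (𝟙 C')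
    (coprod.inl_desc f₁ f₂ |>.trans (Category.comp_id f₁).symm)
    (coprod.inr_desc f₁ f₂ |>.trans (Category.comp_id f₂).symm)
    h₁ h₂ (coprod.inl_desc _ _) (coprod.inr_desc _ _) r hr₁ hr₂
end

section
/- A Set-endofunctor F that preserves monomorphisms preserves preimages if and only if it weakly preserves preimages. -/
open CategoryTheory

universe u

/-- `(P, p₁, p₂)` is a weak pullback of `f₁` and `f₂` in `Set`. -/
def IsWeakSetPullback {P A₁ A₂ C : Type u}
    (p₁ : P → A₁) (p₂ : P → A₂) (f₁ : A₁ → C) (f₂ : A₂ → C) : Prop :=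
  (∀ p, f₁ (p₁ p) = f₂ (p₂ p)) ∧
    ∀ (a₁ : A₁) (a₂ : A₂), f₁ a₁ = f₂ a₂ → ∃ p : P, p₁ p = a₁ ∧ p₂ p = a₂

/-- `(P, p₁, p₂)` is a (genuine) pullback of `f₁` and `f₂` in `Set`. -/
def IsSetPullback {P A₁ A₂ C : Type u}
    (p₁ : P → A₁) (p₂ : P → A₂) (f₁ : A₁ → C) (f₂ : A₂ → C) : Prop :=
  (∀ p, f₁ (p₁ p) = f₂ (p₂ p)) ∧
    ∀ (a₁ : A₁) (a₂ : A₂), f₁ a₁ = f₂ a₂ → ∃! p : P, p₁ p = a₁ ∧ p₂ p = a₂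

/-- A mono-preserving `Set`-endofunctor preserves preimages (pullbacks along an
injective leg) iff it weakly preserves preimages. -/
theorem preserves_preimages_iff_weakly_preserves_preimages
    (F : Type u ⥤ Type u)
    (hmono : ∀ {A B : Type u} (f : A → B),
      Function.Injective f → Function.Injective (F.map (TypeCat.ofHom f))) :
    (∀ {P A₁ A₂ C : Type u} (p₁ : P → A₁) (p₂ : P → A₂) (f₁ : A₁ → C) (f₂ : A₂ → C),
      Function.Injective f₂ → IsSetPullback p₁ p₂ f₁ f₂ →
        IsSetPullback (F.map (TypeCat.ofHom p₁)) (F.map (TypeCat.ofHom p₂)) (F.map (TypeCat.ofHom f₁)) (F.map (TypeCat.ofHom f₂)))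
    ↔
    (∀ {P A₁ A₂ C : Type u} (p₁ : P → A₁) (p₂ : P → A₂) (f₁ : A₁ → C) (f₂ : A₂ → C),
      Function.Injective f₂ → IsSetPullback p₁ p₂ f₁ f₂ →
        IsWeakSetPullback (F.map (TypeCat.ofHom p₁)) (F.map (TypeCat.ofHom p₂)) (F.map (TypeCat.ofHom f₁)) (F.map (TypeCat.ofHom f₂))) := by
  constructor
  · intro h P A₁ A₂ C p₁ p₂ f₁ f₂ hf₂ hpb
    obtain ⟨hc, he⟩ := h p₁ p₂ f₁ f₂ hf₂ hpb
    exact ⟨hc, fun a₁ a₂ hEq => (he a₁ a₂ hEq).exists⟩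
  · intro h P A₁ A₂ C p₁ p₂ f₁ f₂ hf₂ hpb
    obtain ⟨hc, he⟩ := h p₁ p₂ f₁ f₂ hf₂ hpb
    have hp₁ : Function.Injective p₁ := by
      intro x y hxy
      have h2 : p₂ x = p₂ y := hf₂ (by rw [← hpb.1, ← hpb.1, hxy])
      obtain ⟨p, _, hu⟩ := hpb.2 (p₁ x) (p₂ x) (hpb.1 x)
      exact (hu x ⟨rfl, rfl⟩).trans (hu y ⟨hxy.symm, h2.symm⟩).symm
    have hFp₁ := hmono p₁ hp₁
    refine ⟨hc, fun a₁ a₂ hEq => ?_⟩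
    obtain ⟨p, hp⟩ := he a₁ a₂ hEq
    exact ⟨p, hp, fun q hq => hFp₁ (hq.1.trans hp.1.symm)⟩
end

section
/- Every Set-endofunctor preserves nonempty finite intersections: if U, V ⊆ A with U ∩ V ≠ ∅, and the inclusion maps form the pullback square of the inclusions U ↪ A and V ↪ A, then applying F yields a pullback square; in particular the canonical map F(U ∩ V) → F(U) ×_{F(A)} F(V) induced via the images of the inclusions is a bijection onto the intersection of the images of F(U) and F(V) in F(A). -/
open CategoryTheory

universe u

/-- Trnková: every `Set`-endofunctor preserves nonempty intersections. Applying `F`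
to the pullback square of the inclusions `U ↪ A`, `V ↪ A` (with vertex `U ∩ V ≠ ∅`)
yields a pullback square; in particular `F(U ∩ V) → F(A)` is injective and its range
is the intersection of the images of `F(U)` and `F(V)` in `F(A)`. -/
theorem setFunctor_preserves_nonempty_intersections
    (F : Type u ⥤ Type u) {A : Type u} (U V : Set A) (hne : (U ∩ V).Nonempty) :
    -- commutativity of the image square
    (∀ w : F.obj ↥(U ∩ V),
        F.map (TypeCat.ofHom (Subtype.val : U → A))
            (F.map (TypeCat.ofHom (Set.inclusion Set.inter_subset_left)) w) =
          F.map (TypeCat.ofHom (Subtype.val : V → A))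
            (F.map (TypeCat.ofHom (Set.inclusion Set.inter_subset_right)) w)) ∧
    -- the image square is a genuine pullback
    (∀ (u : F.obj ↥U) (v : F.obj ↥V),
        F.map (TypeCat.ofHom (Subtype.val : U → A)) u = F.map (TypeCat.ofHom (Subtype.val : V → A)) v →
          ∃! w : F.obj ↥(U ∩ V),
            F.map (TypeCat.ofHom (Set.inclusion Set.inter_subset_left)) w = u ∧
            F.map (TypeCat.ofHom (Set.inclusion Set.inter_subset_right)) w = v) ∧
    -- the canonical map `F(U ∩ V) → F(A)` is a bijection onto the intersection
    -- of the images of `F(U)` and `F(V)`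
    Function.Injective (F.map (TypeCat.ofHom (Subtype.val : ↥(U ∩ V) → A))) ∧
    Set.range (F.map (TypeCat.ofHom (Subtype.val : ↥(U ∩ V) → A))) =
      Set.range (F.map (TypeCat.ofHom (Subtype.val : U → A))) ∩
        Set.range (F.map (TypeCat.ofHom (Subtype.val : V → A))) := by
  classical
  obtain ⟨a0, h0⟩ := hne
  -- notation
  set iU : U → A := Subtype.val with hiU
  set iV : V → A := Subtype.val with hiV
  set iW : ↥(U ∩ V) → A := Subtype.val with hiW
  set jU : ↥(U ∩ V) → U := Set.inclusion Set.inter_subset_left with hjU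
  set jV : ↥(U ∩ V) → V := Set.inclusion Set.inter_subset_right with hjV
  -- retractions onto the subsets, using the base point `a0 ∈ U ∩ V`
  set f : A → U := fun x => if h : x ∈ U then ⟨x, h⟩ else ⟨a0, h0.1⟩ with hf
  set g : A → V := fun x => if h : x ∈ V then ⟨x, h⟩ else ⟨a0, h0.2⟩ with hg
  set r : A → ↥(U ∩ V) := fun x => if h : x ∈ U ∩ V then ⟨x, h⟩ else ⟨a0, h0⟩ with hr
  have Fc : ∀ {X Y Z : Type u} (p : X → Y) (q : Y → Z) (x : F.obj X),
      F.map (TypeCat.ofHom q) (F.map (TypeCat.ofHom p) x) = F.map (TypeCat.ofHom (q ∘ p)) x := by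
    intro X Y Z p q x
    exact (F.map_comp_apply (TypeCat.ofHom p) (TypeCat.ofHom q) x).symm
  have Fid : ∀ {X : Type u} (x : F.obj X), F.map (TypeCat.ofHom (id : X → X)) x = x := by
    intro X x; exact F.map_id_apply X x
  -- key function equations
  have E1 : f ∘ iU = id := by
    funext x; show f (iU x) = x
    simp only [hf, hiU]; rw [dif_pos x.2]
  have E2 : g ∘ iV = id := by
    funext x; show g (iV x) = x
    simp only [hg, hiV]; rw [dif_pos x.2]
  have E3 : r ∘ iW = id := by
    funext x; show r (iW x) = x
    simp only [hr, hiW]; rw [dif_pos x.2]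
  have E4 : iU ∘ jU = iW := rfl
  have E5 : iV ∘ jV = iW := rfl
  have E6 : jU ∘ r = f ∘ (iV ∘ g) := by
    funext x; show jU (r x) = f (iV (g x))
    by_cases hV : x ∈ V
    · by_cases hU : x ∈ U
      · have hW : x ∈ U ∩ V := ⟨hU, hV⟩
        simp only [hjU, hr, hf, hg, hiV]
        rw [dif_pos hW, dif_pos hV]; rw [dif_pos hU]
      · have hW : ¬ x ∈ U ∩ V := fun h => hU h.1
        simp only [hjU, hr, hf, hg, hiV]
        rw [dif_neg hW, dif_pos hV]; rw [dif_neg hU]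
    · have hW : ¬ x ∈ U ∩ V := fun h => hV h.2
      simp only [hjU, hr, hf, hg, hiV]
      rw [dif_neg hW, dif_neg hV]; rw [dif_pos h0.1]
  have E7 : jV ∘ r = g ∘ (iU ∘ f) := by
    funext x; show jV (r x) = g (iU (f x))
    by_cases hU : x ∈ U
    · by_cases hV : x ∈ V
      · have hW : x ∈ U ∩ V := ⟨hU, hV⟩
        simp only [hjV, hr, hf, hg, hiU]
        rw [dif_pos hW, dif_pos hU]; rw [dif_pos hV]
      · have hW : ¬ x ∈ U ∩ V := fun h => hV h.2
        simp only [hjV, hr, hf, hg, hiU]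
        rw [dif_neg hW, dif_pos hU]; rw [dif_neg hV]
    · have hW : ¬ x ∈ U ∩ V := fun h => hU h.1
      simp only [hjV, hr, hf, hg, hiU]
      rw [dif_neg hW, dif_neg hU]; rw [dif_pos h0.2]
  -- pointwise versions under `F`
  have E4p : ∀ w : F.obj ↥(U ∩ V), F.map (TypeCat.ofHom iU) (F.map (TypeCat.ofHom jU) w) = F.map (TypeCat.ofHom iW) w := by
    intro w; rw [Fc, E4]
  have E5p : ∀ w : F.obj ↥(U ∩ V), F.map (TypeCat.ofHom iV) (F.map (TypeCat.ofHom jV) w) = F.map (TypeCat.ofHom iW) w := by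
    intro w; rw [Fc, E5]
  have E6p : ∀ x : F.obj A, F.map (TypeCat.ofHom jU) (F.map (TypeCat.ofHom r) x) = F.map (TypeCat.ofHom f) (F.map (TypeCat.ofHom iV) (F.map (TypeCat.ofHom g) x)) := by
    intro x; rw [Fc r jU, Fc g iV, Fc (iV ∘ g) f, E6]
  have E7p : ∀ x : F.obj A, F.map (TypeCat.ofHom jV) (F.map (TypeCat.ofHom r) x) = F.map (TypeCat.ofHom g) (F.map (TypeCat.ofHom iU) (F.map (TypeCat.ofHom f) x)) := by
    intro x; rw [Fc r jV, Fc f iU, Fc (iU ∘ f) g, E7]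
  -- commutativity
  have comm : ∀ w : F.obj ↥(U ∩ V), F.map (TypeCat.ofHom iU) (F.map (TypeCat.ofHom jU) w) = F.map (TypeCat.ofHom iV) (F.map (TypeCat.ofHom jV) w) := by
    intro w; rw [E4p, E5p]
  -- injectivity of `F(ι_{U∩V})`
  have injW : Function.Injective (F.map (TypeCat.ofHom iW)) := by
    intro w w' h
    have := congrArg (F.map (TypeCat.ofHom r)) h
    rwa [Fc, Fc, E3, Fid, Fid] at this
  -- existence part of the universal property
  have exists_w : ∀ (u : F.obj ↥U) (v : F.obj ↥V),
      F.map (TypeCat.ofHom iU) u = F.map (TypeCat.ofHom iV) v →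
        F.map (TypeCat.ofHom jU) (F.map (TypeCat.ofHom r) (F.map (TypeCat.ofHom iU) u)) = u ∧ F.map (TypeCat.ofHom jV) (F.map (TypeCat.ofHom r) (F.map (TypeCat.ofHom iU) u)) = v := by
    intro u v huv
    have h1 : F.map (TypeCat.ofHom g) (F.map (TypeCat.ofHom iU) u) = v := by rw [huv, Fc, E2, Fid]
    have h2 : F.map (TypeCat.ofHom f) (F.map (TypeCat.ofHom iU) u) = u := by rw [Fc, E1, Fid]
    constructor
    · rw [E6p, h1, ← huv, h2]
    · rw [E7p, h2, huv, Fc, E2, Fid]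
  refine ⟨comm, ?_, injW, ?_⟩
  · intro u v huv
    refine ⟨F.map (TypeCat.ofHom r) (F.map (TypeCat.ofHom iU) u), exists_w u v huv, ?_⟩
    rintro w' ⟨hw1, hw2⟩
    apply injW
    rw [← E4p, ← E4p, hw1, (exists_w u v huv).1]
  · ext y
    constructor
    · rintro ⟨w, rfl⟩
      exact ⟨⟨F.map (TypeCat.ofHom jU) w, E4p w⟩, ⟨F.map (TypeCat.ofHom jV) w, E5p w⟩⟩
    · rintro ⟨⟨u, rfl⟩, ⟨v, hv⟩⟩
      obtain ⟨h1, _⟩ := exists_w u v hv.symm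
      exact ⟨F.map (TypeCat.ofHom r) (F.map (TypeCat.ofHom iU) u), by rw [← E4p, h1]⟩
end

section
/- A Set-endofunctor F preserves preimages if and only if it preserves classifying preimages, i.e. for every set A and subset U ⊆ A, applying F to the pullback square consisting of the inclusion U ↪ A, the characteristic function χ_U : A → {0,1}, the unique map U → {1}, and the inclusion {1} ↪ {0,1}, yields a pullback square. -/
open CategoryTheory

universe u

/-- Characterization of pullbacks along an injective second leg. -/
lemma isSetPullback_iff_of_inj {P A₁ A₂ C : Type u} {p₁ : P → A₁} {p₂ : P → A₂}
    {f₁ : A₁ → C} {f₂ : A₂ → C} (hf₂ : Function.Injective f₂) :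
    IsSetPullback p₁ p₂ f₁ f₂ ↔
      ((∀ p, f₁ (p₁ p) = f₂ (p₂ p)) ∧ Function.Injective p₁ ∧
        ∀ a₁ : A₁, (∃ a₂, f₁ a₁ = f₂ a₂) → ∃ p, p₁ p = a₁) := by
  constructor
  · rintro ⟨hc, h⟩
    refine ⟨hc, ?_, ?_⟩
    · intro p q hpq
      have h2 : p₂ p = p₂ q := hf₂ (by rw [← hc, ← hc, hpq])
      obtain ⟨r, _, hu⟩ := h (p₁ q) (p₂ q) (by rw [hc])
      rw [hu p ⟨hpq, h2⟩, hu q ⟨rfl, rfl⟩]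
    · rintro a₁ ⟨a₂, ha⟩
      obtain ⟨p, ⟨hp, _⟩, _⟩ := h a₁ a₂ ha
      exact ⟨p, hp⟩
  · rintro ⟨hc, hinj, hsurj⟩
    refine ⟨hc, fun a₁ a₂ ha => ?_⟩
    obtain ⟨p, hp⟩ := hsurj a₁ ⟨a₂, ha⟩
    refine ⟨p, ⟨hp, hf₂ ?_⟩, fun q hq => hinj (hq.1.trans hp.symm)⟩
    rw [← hc, hp, ha]

/-- Lemma 2 (Gumm–Schröder): a mono-preserving `Set`-functor preserves preimages iff
it preserves classifying preimages, i.e. the preimage of `{1} ↪ {0,1}` along the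
characteristic function `χ_U : A → {0,1}` of any subset `U ⊆ A`. Here the
two-element set `{0,1}` is rendered as `ULift Prop` (classically two-valued),
`{1}` as the one-point set mapping to "true", and `χ_U a = (a ∈ U)`. -/
theorem preserves_preimages_iff_classifying
    (F : Type u ⥤ Type u)
    (hmono : ∀ {A B : Type u} (f : A → B),
      Function.Injective f → Function.Injective (F.map (TypeCat.ofHom f))) :
    (∀ {P A₁ A₂ C : Type u} (p₁ : P → A₁) (p₂ : P → A₂) (f₁ : A₁ → C) (f₂ : A₂ → C),
      Function.Injective f₂ → IsSetPullback p₁ p₂ f₁ f₂ →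
        IsSetPullback (F.map (TypeCat.ofHom p₁)) (F.map (TypeCat.ofHom p₂)) (F.map (TypeCat.ofHom f₁))
          (F.map (TypeCat.ofHom f₂)))
    ↔
    (∀ (A : Type u) (U : Set A),
      IsSetPullback
        (F.map (TypeCat.ofHom (Subtype.val : U → A)))
        (F.map (TypeCat.ofHom ((fun _ => PUnit.unit) : U → PUnit.{u + 1})))
        (F.map (TypeCat.ofHom (X := A) (fun a => (⟨a ∈ U⟩ : ULift.{u} Prop))))
        (F.map (TypeCat.ofHom ((fun _ => ⟨True⟩) : PUnit.{u + 1} → ULift.{u} Prop)))) := by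
  constructor
  · intro h A U
    refine h _ _ _ _ (fun a b _ => Subsingleton.elim a b) ⟨?_, ?_⟩
    · intro u
      exact congrArg ULift.up (eq_true u.2)
    · intro a pu hpa
      have hmem : a ∈ U := of_eq_true (congrArg ULift.down hpa)
      exact ⟨⟨a, hmem⟩, ⟨rfl, Subsingleton.elim _ _⟩,
        fun q hq => Subtype.ext hq.1⟩
  · intro hcl P A₁ A₂ C p₁ p₂ f₁ f₂ hf₂ hpb
    obtain ⟨hc, hinj, hsurj⟩ := (isSetPullback_iff_of_inj hf₂).1 hpb
    set V : Set C := Set.range f₂ with hV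
    set U : Set A₁ := f₁ ⁻¹' V with hU
    -- the comparison bijection `P ≃ U`
    have hgbij : Function.Bijective (fun p : P => (⟨p₁ p, ⟨p₂ p, (hc p).symm⟩⟩ : U)) := by
      constructor
      · intro p q hpq
        exact hinj (congrArg Subtype.val hpq)
      · rintro ⟨a₁, a₂, ha⟩
        obtain ⟨p, hp⟩ := hsurj a₁ ⟨a₂, ha.symm⟩
        exact ⟨p, Subtype.ext hp⟩
    set g : P → U := fun p => (⟨p₁ p, ⟨p₂ p, (hc p).symm⟩⟩ : U) with hg
    refine (isSetPullback_iff_of_inj (hmono f₂ hf₂)).2 ⟨?_, hmono p₁ hinj, ?_⟩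
    · intro x
      have h1 := FunctorToTypes.map_comp_apply F (TypeCat.ofHom p₁) (TypeCat.ofHom f₁) x
      have h2 := FunctorToTypes.map_comp_apply F (TypeCat.ofHom p₂) (TypeCat.ofHom f₂) x
      rw [← h1, ← h2]
      have : (TypeCat.ofHom p₁ ≫ TypeCat.ofHom f₁ : P ⟶ C) = TypeCat.ofHom p₂ ≫ TypeCat.ofHom f₂ :=
        congrArg (fun k : P → C => TypeCat.ofHom k) (funext hc)
      rw [this]
    · rintro x ⟨y, hxy⟩
      -- characteristic maps
      set χV : C → ULift.{u} Prop := fun c => ⟨c ∈ V⟩ with hχV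
      have hkey : F.map (TypeCat.ofHom (X := A₁) (fun a => (⟨a ∈ U⟩ : ULift.{u} Prop))) x
          = F.map (TypeCat.ofHom ((fun _ => ⟨True⟩) : PUnit.{u + 1} → ULift.{u} Prop))
              (F.map (TypeCat.ofHom ((fun _ => PUnit.unit) : A₂ → PUnit.{u + 1})) y) := by
        have e1 : TypeCat.ofHom (X := A₁) (fun a => (⟨a ∈ U⟩ : ULift.{u} Prop))
            = (TypeCat.ofHom f₁ ≫ TypeCat.ofHom χV : A₁ ⟶ ULift.{u} Prop) := rfl
        have e2 : (TypeCat.ofHom f₂ ≫ TypeCat.ofHom χV : A₂ ⟶ ULift.{u} Prop)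
            = TypeCat.ofHom ((fun _ => PUnit.unit) : A₂ → PUnit.{u + 1}) ≫
                TypeCat.ofHom ((fun _ => ⟨True⟩) : PUnit.{u + 1} → ULift.{u} Prop) := by
          refine congrArg (fun k : A₂ → ULift.{u} Prop => TypeCat.ofHom k) ?_
          funext a
          exact congrArg ULift.up (eq_true ⟨a, rfl⟩)
        calc F.map (TypeCat.ofHom (X := A₁) (fun a => (⟨a ∈ U⟩ : ULift.{u} Prop))) x
            = F.map (TypeCat.ofHom f₁ ≫ TypeCat.ofHom χV) x := by rw [e1]
          _ = F.map (TypeCat.ofHom χV) (F.map (TypeCat.ofHom f₁) x) :=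
            FunctorToTypes.map_comp_apply F _ _ x
          _ = F.map (TypeCat.ofHom χV) (F.map (TypeCat.ofHom f₂) y) := by rw [hxy]
          _ = F.map (TypeCat.ofHom f₂ ≫ TypeCat.ofHom χV) y :=
            (FunctorToTypes.map_comp_apply F _ _ y).symm
          _ = _ := by rw [e2]; exact FunctorToTypes.map_comp_apply F _ _ y
      obtain ⟨z, ⟨hz, _⟩, _⟩ := (hcl A₁ U).2 x
        (F.map (TypeCat.ofHom ((fun _ => PUnit.unit) : A₂ → PUnit.{u + 1})) y) hkey
      -- pull `z` back through the bijection `g`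
      set e : P ≃ U := Equiv.ofBijective g hgbij with he
      refine ⟨F.map (TypeCat.ofHom (⇑e.symm : U → P)) z, ?_⟩
      have hcomp : (TypeCat.ofHom (⇑e.symm : U → P) ≫ TypeCat.ofHom p₁ : ↥U ⟶ A₁)
          = TypeCat.ofHom (Subtype.val : ↥U → A₁) := by
        refine congrArg (fun k : ↥U → A₁ => TypeCat.ofHom k) ?_
        funext u
        have := congrArg Subtype.val (e.apply_symm_apply u)
        exact this
      calc F.map (TypeCat.ofHom p₁) (F.map (TypeCat.ofHom (⇑e.symm : U → P)) z)
          = F.map (TypeCat.ofHom (⇑e.symm : U → P) ≫ TypeCat.ofHom p₁) z :=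
            (FunctorToTypes.map_comp_apply F _ _ z).symm
        _ = F.map (TypeCat.ofHom (Subtype.val : U → A₁)) z := by rw [hcomp]
        _ = x := hz
end

section
/- If Σ axiomatizes a congruence modular variety (in the sense of Dent–Kearnes–Szendrei, Σ idempotent with Σ ∪ Σ' inconsistent), then the free-algebra functor F_Σ does not preserve preimages; more precisely, if Σ ∪ Σ' is inconsistent and Σ is consistent (V(Σ) contains an algebra with more than one element), then Σ ⊬ Σ', hence F_Σ does not preserve preimages. -/
universe u

/-- A finitary algebraic signature. -/
structure Sig where
  ops : Type
  ar : ops → ℕ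

namespace UA

/-- Terms over the signature `S` with variables from `X`. -/
inductive Term (S : Sig) (X : Type) : Type where
  | var : X → Term S X
  | app : (o : S.ops) → (Fin (S.ar o) → Term S X) → Term S X

/-- Simultaneous substitution of terms for variables. -/
def Term.subst {S : Sig} {X Y : Type} (σ : X → Term S Y) : Term S X → Term S Y
  | .var x => σ x
  | .app o ts => .app o fun i => (ts i).subst σ

/-- Renaming (substitution of variables for variables). -/
def Term.rename {S : Sig} {X Y : Type} (φ : X → Y) (t : Term S X) : Term S Y :=
  t.subst fun x => .var (φ x)

/-- Equational provability from the set `Γ` of axioms (pairs of terms over the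
countable variable set `ℕ`), over arbitrary variable sets. -/
inductive Eqv {S : Sig} (Γ : Set (Term S ℕ × Term S ℕ)) :
    {X : Type} → Term S X → Term S X → Prop where
  | axm {X : Type} {l r : Term S ℕ} (h : (l, r) ∈ Γ) (σ : ℕ → Term S X) :
      Eqv Γ (l.subst σ) (r.subst σ)
  | refl {X : Type} (t : Term S X) : Eqv Γ t t
  | symm {X : Type} {t u : Term S X} : Eqv Γ t u → Eqv Γ u t
  | trans {X : Type} {t u v : Term S X} : Eqv Γ t u → Eqv Γ u v → Eqv Γ t v
  | congr {X : Type} (o : S.ops) {ts us : Fin (S.ar o) → Term S X} :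
      (∀ i, Eqv Γ (ts i) (us i)) → Eqv Γ (.app o ts) (.app o us)
  | sbst {X Y : Type} {t u : Term S X} (σ : X → Term S Y) :
      Eqv Γ t u → Eqv Γ (t.subst σ) (u.subst σ)

def termSetoid {S : Sig} (Γ : Set (Term S ℕ × Term S ℕ)) (X : Type) : Setoid (Term S X) :=
  ⟨Eqv Γ, ⟨fun t => .refl t, fun h => h.symm, fun h h' => h.trans h'⟩⟩

/-- The free algebra over the variable set `X` in the variety axiomatized by `Γ`:
terms modulo `Γ`-provable equality.  This is the object part of the free-algebra
functor `F_Σ`. -/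
def FreeAlg {S : Sig} (Γ : Set (Term S ℕ × Term S ℕ)) (X : Type) : Type :=
  Quotient (termSetoid Γ X)

/-- The action of the free-algebra functor `F_Σ` on maps: variable substitution. -/
def FreeAlg.map {S : Sig} {Γ : Set (Term S ℕ × Term S ℕ)} {X Y : Type} (φ : X → Y) :
    FreeAlg Γ X → FreeAlg Γ Y :=
  Quotient.map (Term.rename φ) fun _ _ h => h.sbst _

end UA

namespace UA

variable {S : Sig}

/-- Weak independence of the first variable position (see Dent–Kearnes–Szendrei). -/
def WeakIndep (Γ : Set (Term S ℕ × Term S ℕ)) {n : ℕ} (p : Term S (Fin (n + 1))) : Prop :=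
  ∃ (x y : ℕ) (v : Fin n → ℕ) (q : Term S Unit),
    x ≠ y ∧ Eqv Γ (p.rename (Fin.cases x v)) (q.rename fun _ => y)

/-- The derivative `Σ'` of `Σ`: all independence equations
`p(x, z₁, …, zₙ) ≈ p(y, z₁, …, zₙ)` (variables distinct) for terms `p`
weakly independent of the occurrence `x`. -/
def Deriv (Γ : Set (Term S ℕ × Term S ℕ)) : Set (Term S ℕ × Term S ℕ) :=
  { e | ∃ (n : ℕ) (p : Term S (Fin (n + 1))), WeakIndep Γ p ∧
        e = (p.rename (Fin.cases 0 fun i => (i : ℕ) + 2),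
             p.rename (Fin.cases 1 fun i => (i : ℕ) + 2)) }

/-- The free-algebra functor preserves preimages. -/
def PreservesPreimages (Γ : Set (Term S ℕ × Term S ℕ)) : Prop :=
  ∀ (X Y : Type) (φ : X → Y) (V : Set Y) (t : FreeAlg Γ X),
    FreeAlg.map φ t ∈ Set.range (FreeAlg.map (Γ := Γ) (Subtype.val : V → Y)) →
      t ∈ Set.range (FreeAlg.map (Γ := Γ) (Subtype.val : (φ ⁻¹' V) → X))

/-!
If `F_Σ` preserves preimages, every equation of `Σ'` is derivable from `Σ`. Given `p` with
`p(x, v̄) ≈ q(y)`, let `φ` send `0, 1` to `x` and `zᵢ = i + 2` to `vᵢ`. Then `φ` maps `p(0, z̄)` into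
the image of `F_Σ({y})`, so preservation of preimages writes `p(0, z̄)` as a term in variables of
`φ⁻¹{y}`; these avoid `0` and `1`, so swapping `0` and `1` fixes that term, whence
`p(0, z̄) ≈ p(1, z̄)`. Once `Σ ⊢ Σ'`, the inconsistency of `Σ ∪ Σ'` is one of `Σ`.
-/

namespace Term

theorem subst_subst {X Y Z : Type} (σ : X → Term S Y) (τ : Y → Term S Z) (t : Term S X) :
    (t.subst σ).subst τ = t.subst fun x => (σ x).subst τ := by
  induction t with
  | var x => rfl
  | app o ts ih => exact congrArg (Term.app o) (funext ih)

theorem rename_rename {X Y Z : Type} (ψ : X → Y) (φ : Y → Z) (t : Term S X) :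
    (t.rename ψ).rename φ = t.rename (φ ∘ ψ) :=
  subst_subst _ _ t

end Term

namespace Eqv

variable {Γ : Set (Term S ℕ × Term S ℕ)}

theorem of_union {Δ : Set (Term S ℕ × Term S ℕ)} (hΔ : ∀ e ∈ Δ, Eqv Γ e.1 e.2)
    {X : Type} {t u : Term S X} (h : Eqv (Γ ∪ Δ) t u) : Eqv Γ t u := by
  induction h with
  | axm h σ => exact h.elim (fun hΓ => .axm hΓ σ) fun hΔe => (hΔ _ hΔe).sbst σ
  | refl t => exact .refl t
  | symm _ ih => exact ih.symm
  | trans _ _ ih₁ ih₂ => exact ih₁.trans ih₂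
  | congr o _ ih => exact .congr o ih
  | sbst σ _ ih => exact ih.sbst σ

theorem rename_of_fixes_vars {X Y : Type} {f : X → Y} {π : Y → Y} (hπ : ∀ u, π (f u) = f u)
    {s : Term S X} {t : Term S Y} (h : Eqv Γ (s.rename f) t) : Eqv Γ t (t.rename π) := by
  have hs : (s.rename f).rename π = s.rename f := by
    rw [Term.rename_rename]
    exact congrArg (Term.rename · s) (funext hπ)
  exact h.symm.trans (hs ▸ h.sbst fun y => .var (π y))

end Eqv

theorem PreservesPreimages.exists_rename_val {Γ : Set (Term S ℕ × Term S ℕ)}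
    (hΓ : PreservesPreimages Γ) {X Y : Type} {φ : X → Y} {V : Set Y} {t : Term S X}
    {r : Term S V} (h : Eqv Γ (t.rename φ) (r.rename Subtype.val)) :
    ∃ s : Term S (φ ⁻¹' V), Eqv Γ (s.rename Subtype.val) t := by
  obtain ⟨s, hs⟩ := hΓ X Y φ V (Quotient.mk _ t) ⟨Quotient.mk _ r, Quotient.sound h.symm⟩
  obtain ⟨s, rfl⟩ := Quotient.exists_rep s
  exact ⟨s, Quotient.exact hs⟩

def collapseZeroOne {n : ℕ} (x : ℕ) (v : Fin n → ℕ) : ℕ → ℕ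
  | 0 | 1 => x
  | m + 2 => if h : m < n then v ⟨m, h⟩ else x

theorem collapseZeroOne_comp_cases_zero {n : ℕ} (x : ℕ) (v : Fin n → ℕ) :
    collapseZeroOne x v ∘ Fin.cases 0 (fun i : Fin n => (i : ℕ) + 2) = Fin.cases x v := by
  funext j
  cases j using Fin.cases with
  | zero => rfl
  | succ i => simp [collapseZeroOne]

theorem swap_comp_cases_zero {n : ℕ} :
    Equiv.swap 0 1 ∘ Fin.cases 0 (fun i : Fin n => (i : ℕ) + 2) =
      Fin.cases 1 (fun i : Fin n => (i : ℕ) + 2) := by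
  funext j
  cases j using Fin.cases with
  | zero => simp
  | succ i => simp [Equiv.swap_apply_of_ne_of_ne]

theorem PreservesPreimages.provable_deriv {Γ : Set (Term S ℕ × Term S ℕ)}
    (hΓ : PreservesPreimages Γ) : ∀ e ∈ Deriv Γ, Eqv Γ e.1 e.2 := by
  rintro _ ⟨n, p, ⟨x, y, v, q, hxy, hq⟩, rfl⟩
  set t := p.rename (Fin.cases 0 fun i : Fin n => (i : ℕ) + 2)
  have ht : Eqv Γ (t.rename (collapseZeroOne x v))
      ((q.rename fun _ => (⟨y, rfl⟩ : ({y} : Set ℕ))).rename Subtype.val) := by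
    rwa [Term.rename_rename, Term.rename_rename, collapseZeroOne_comp_cases_zero]
  obtain ⟨s, hs⟩ := hΓ.exists_rename_val ht
  have hfix : ∀ u : collapseZeroOne x v ⁻¹' {y}, Equiv.swap 0 1 u.val = u.val := by
    rintro ⟨u, hu⟩
    refine Equiv.swap_apply_of_ne_of_ne ?_ ?_ <;> rintro rfl <;> exact hxy hu
  simpa only [t, Term.rename_rename, swap_comp_cases_zero] using
    hs.rename_of_fixes_vars hfix

/-- If `Σ ∪ Σ'` is inconsistent while `Σ` is consistent (as for congruence modular
varieties à la Dent–Kearnes–Szendrei), then `Σ ⊬ Σ'`, and hence the free-algebra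
functor `F_Σ` does not preserve preimages. -/
theorem modular_implies_not_preservesPreimages (Γ : Set (Term S ℕ × Term S ℕ))
    (hincons : Eqv (Γ ∪ Deriv Γ) (Term.var 0 : Term S ℕ) (Term.var 1))
    (hcons : ¬ Eqv Γ (Term.var 0 : Term S ℕ) (Term.var 1)) :
    (¬ ∀ e ∈ Deriv Γ, Eqv Γ e.1 e.2) ∧ ¬ PreservesPreimages Γ := by
  have not_provable_deriv : ¬ ∀ e ∈ Deriv Γ, Eqv Γ e.1 e.2 :=
    fun hderiv => hcons (hincons.of_union hderiv)
  exact ⟨not_provable_deriv, fun hΓ => not_provable_deriv hΓ.provable_deriv⟩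

end UA
end

section
/- Suppose the free-algebra functor F_Σ weakly preserves kernel pairs. Then for any ternary terms p, q with Σ ⊢ p(x, x, y) ≈ q(x, y, y), there exists a quaternary term s such that Σ ⊢ p(x, y, z) ≈ s(x, y, z, z) and Σ ⊢ q(x, y, z) ≈ s(x, x, y, z). -/
universe u

namespace UA

variable {S : Sig}

/-- The free-algebra functor `F_Σ` weakly preserves kernel pairs. -/
def WeaklyPreservesKernelPairs (Γ : Set (Term S ℕ × Term S ℕ)) : Prop :=
  ∀ (X Y : Type) (f : X → Y) (p q : FreeAlg Γ X),
    FreeAlg.map f p = FreeAlg.map f q →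
      ∃ w : FreeAlg Γ {xy : X × X // f xy.1 = f xy.2},
        FreeAlg.map (fun k => k.1.1) w = p ∧ FreeAlg.map (fun k => k.1.2) w = q

/-! The hypothesis says that `p` renamed along `φ = (x, x, z)` and `q` renamed along
`ψ = (x, z, z)` agree in `F_Σ{x, z}`. As `φ` and `ψ` are surjective, weak preservation of their
pullback `P = {(x,x), (y,x), (z,y), (z,z)}` gives a term over `P` whose two projections are `p`
and `q`; reading the four elements of `P` as four variables turns it into `s`. -/

open Function

theorem Term.subst_var {X : Type} (t : Term S X) : t.subst .var = t := by
  induction t with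
  | var x => rfl
  | app o ts ih => exact congrArg (Term.app o) (funext ih)

theorem Term.subst_subst_s12 {X Y Z : Type} (σ : X → Term S Y) (τ : Y → Term S Z)
    (t : Term S X) : (t.subst σ).subst τ = t.subst fun x => (σ x).subst τ := by
  induction t with
  | var x => rfl
  | app o ts ih => exact congrArg (Term.app o) (funext ih)

theorem Term.rename_id {X : Type} (t : Term S X) : t.rename id = t :=
  t.subst_var

theorem Term.rename_rename_s12 {X Y Z : Type} (f : X → Y) (g : Y → Z) (t : Term S X) :
    (t.rename f).rename g = t.rename (g ∘ f) :=
  Term.subst_subst_s12 _ _ t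

variable {Γ : Set (Term S ℕ × Term S ℕ)}

theorem Eqv.rename {X Y : Type} {t u : Term S X} (h : Eqv Γ t u) (f : X → Y) :
    Eqv Γ (t.rename f) (u.rename f) :=
  h.sbst _

theorem Eqv.of_rename {X Y : Type} {t u : Term S X} {ι : X → Y} {ρ : Y → X}
    (hρ : LeftInverse ρ ι) (h : Eqv Γ (t.rename ι) (u.rename ι)) : Eqv Γ t u := by
  simpa only [Term.rename_rename_s12, hρ.comp_eq_id, Term.rename_id] using h.rename ρ

theorem WeaklyPreservesKernelPairs.exists_term (hker : WeaklyPreservesKernelPairs Γ)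
    {X Y : Type} {f : X → Y} {t u : Term S X} (h : Eqv Γ (t.rename f) (u.rename f)) :
    ∃ w : Term S (f.PullbackSelf),
      Eqv Γ (w.rename Pullback.fst) t ∧ Eqv Γ (w.rename Pullback.snd) u := by
  obtain ⟨w, hw₁, hw₂⟩ := hker X Y f ⟦t⟧ ⟦u⟧ (Quotient.sound h)
  obtain ⟨w, rfl⟩ := Quotient.exists_rep w
  exact ⟨w, Quotient.exact hw₁, Quotient.exact hw₂⟩

/-- Gumm–Henkel: take a weak kernel pair of `[φ, ψ] : A ⊕ B → C` and map it to the pullback by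
retractions of the two coproduct injections over `C`, which exist because `φ`, `ψ` are onto. -/
theorem WeaklyPreservesKernelPairs.exists_pullback_term (hker : WeaklyPreservesKernelPairs Γ)
    {A B C : Type} {φ : A → C} {ψ : B → C} (hφ : Surjective φ) (hψ : Surjective ψ)
    {t : Term S A} {u : Term S B} (h : Eqv Γ (t.rename φ) (u.rename ψ)) :
    ∃ w : Term S (φ.Pullback ψ),
      Eqv Γ (w.rename Pullback.fst) t ∧ Eqv Γ (w.rename Pullback.snd) u := by
  let α : A ⊕ B → A := Sum.elim id (surjInv hφ ∘ ψ)
  let β : A ⊕ B → B := Sum.elim (surjInv hψ ∘ φ) id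
  have hα : φ ∘ α = id ∘ Sum.elim φ ψ := by
    ext (a | b)
    exacts [rfl, surjInv_eq hφ (ψ b)]
  have hβ : ψ ∘ β = id ∘ Sum.elim φ ψ := by
    ext (a | b)
    exacts [surjInv_eq hψ (φ a), rfl]
  have hk : Eqv Γ ((t.rename Sum.inl).rename (Sum.elim φ ψ))
      ((u.rename Sum.inr).rename (Sum.elim φ ψ)) := by
    rwa [Term.rename_rename_s12, Term.rename_rename_s12]
  obtain ⟨w, hw₁, hw₂⟩ := hker.exists_term hk
  refine ⟨w.rename (mapPullback α id β hα hβ), ?_, ?_⟩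
  · convert hw₁.rename α using 1
    · simp only [Term.rename_rename_s12]; rfl
    · rw [Term.rename_rename_s12]; exact (Term.rename_id t).symm
  · convert hw₂.rename β using 1
    · simp only [Term.rename_rename_s12]; rfl
    · rw [Term.rename_rename_s12]; exact (Term.rename_id u).symm

def collapseXY : Fin 3 → Fin 2 := ![0, 0, 1]

def collapseYZ : Fin 3 → Fin 2 := ![0, 1, 1]

/-- Enumerates the pullback `{(x,x), (y,x), (z,y), (z,z)}` as the four variables of `s`. -/
def pullbackIndex (k : collapseXY.Pullback collapseYZ) : Fin 4 :=
  if k.snd = 2 then 3 else k.fst.castSucc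

/-- Lemma 7: if `F_Σ` weakly preserves kernel pairs, then any ternary terms `p`, `q`
with `Σ ⊢ p(x,x,y) ≈ q(x,y,y)` admit a quaternary term `s` with
`Σ ⊢ p(x,y,z) ≈ s(x,y,z,z)` and `Σ ⊢ q(x,y,z) ≈ s(x,x,y,z)`. -/
theorem kernel_pairs_give_quaternary_term
    (Γ : Set (Term S ℕ × Term S ℕ)) (hker : WeaklyPreservesKernelPairs Γ)
    (p q : Term S (Fin 3))
    (h : Eqv Γ (p.rename ![0, 0, 1]) (q.rename ![0, 1, 1] : Term S ℕ)) :
    ∃ s : Term S (Fin 4),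
      Eqv Γ (p.rename ![0, 1, 2]) (s.rename ![0, 1, 2, 2] : Term S ℕ) ∧
      Eqv Γ (q.rename ![0, 1, 2]) (s.rename ![0, 0, 1, 2] : Term S ℕ) := by
  have hpq : Eqv Γ (p.rename collapseXY) (q.rename collapseYZ) := by
    refine Eqv.of_rename (ι := Fin.val) (ρ := Fin.ofNat 2) (by decide) ?_
    rw [Term.rename_rename_s12, Term.rename_rename_s12]
    convert h using 2 <;> decide
  obtain ⟨w, hw₁, hw₂⟩ := hker.exists_pullback_term (by decide) (by decide) hpq
  refine ⟨w.rename pullbackIndex, ?_, ?_⟩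
  · have := (hw₁.rename ![0, 1, 2]).symm
    rwa [Term.rename_rename_s12, show ![0, 1, 2] ∘ Pullback.fst = ![0, 1, 2, 2] ∘ pullbackIndex
      by decide, ← Term.rename_rename_s12] at this
  · have := (hw₂.rename ![0, 1, 2]).symm
    rwa [Term.rename_rename_s12, show ![0, 1, 2] ∘ Pullback.snd = ![0, 0, 1, 2] ∘ pullbackIndex
      by decide, ← Term.rename_rename_s12] at this

end UA
end
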